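/- Abstract bounded Löb self-play defection for CUPOD: under the same abstract bounded provability structure satisfying the Parametric Bounded Löb principle, if CUPOD(k) is defined to defect iff Box_k('opponent defects against CUPOD(k)'), then for all sufficiently large k, CUPOD(k) versus CUPOD(k) yields mutual defection. -/
import Mathlib


/-- Actions in the open-source Prisoner's Dilemma. -/
inductive Act : Type
  | C : Act  -- cooperate
  | D : Act  -- defect
deriving DecidableEq

/-- **Abstract bounded Löb self-play defection for CUPOD**: under an abstract
family of bounded provability predicates `Box k` satisfying the Parametric
Bounded Löb principle, the agent `CUPOD(k)` — which defects iff `Box k` of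
"the opponent defects against CUPOD(k)" — ends up in mutual defection in
self-play for all sufficiently large `k`. -/
theorem cupod_selfplay_defection {Agent : Type}
    (plays : Agent → Agent → Act)
    (Box : ℕ → Prop → Prop)
    -- Parametric Bounded Löb principle
    (pblt : ∀ (p : ℕ → Prop) (f : ℕ → ℕ) (k₁ : ℕ),
      Monotone f → Computable f →
      (∃ c : ℝ, 0 < c ∧ ∃ khat : ℕ, ∀ k > khat, c * Real.log k < (f k : ℝ)) →
      (∀ k > k₁, Box (f k) (p k) → p k) →
      ∃ k₂ : ℕ, ∀ k > k₂, p k)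
    (cupod : ℕ → Agent)
    (hcupod : ∀ (k : ℕ) (opp : Agent),
      plays (cupod k) opp = Act.D ↔ Box k (plays opp (cupod k) = Act.D)) :
    ∃ k₂ : ℕ, ∀ k > k₂, plays (cupod k) (cupod k) = Act.D := by
  refine pblt (fun k => plays (cupod k) (cupod k) = Act.D) id 0 monotone_id Computable.id ?_ ?_
  · refine ⟨1, one_pos, 0, fun k hk => ?_⟩
    have hk' : (0:ℝ) < k := by exact_mod_cast hk
    have := Real.log_le_sub_one_of_pos hk'
    simpa using this.trans_lt (by linarith)
  · intro k _ hb
    exact (hcupod k (cupod k)).mpr hb
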